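/- arXiv:1701.03279 — 2 statements merged into one kernel-verified Lean document; each statement's English description precedes it below -/
import Mathlib

section
/- For every positive integer n and every γ ∈ SL(2,ℝ), the matrix A_n(γ) preserves the bilinear form with Gram matrix G_n; that is, A_n(γ)ᵀ · G_n · A_n(γ) = G_n. -/
open Matrix

/-- For `γ = ((a,b),(c,d))`, the matrix
`A_n(γ) = ((a², −2nab, nb²), (−ac/n, ad+bc, −bd), (c²/n, −2cd, d²))`. -/
noncomputable def A (n : ℕ) (γ : Matrix (Fin 2) (Fin 2) ℝ) : Matrix (Fin 3) (Fin 3) ℝ :=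
  !![(γ 0 0)^2, -2*(n:ℝ)*(γ 0 0)*(γ 0 1), (n:ℝ)*(γ 0 1)^2;
     -((γ 0 0)*(γ 1 0))/(n:ℝ), (γ 0 0)*(γ 1 1) + (γ 0 1)*(γ 1 0), -((γ 0 1)*(γ 1 1));
     (γ 1 0)^2/(n:ℝ), -2*(γ 1 0)*(γ 1 1), (γ 1 1)^2]

/-- The Gram matrix `G_n = ((0,0,−1),(0,2n,0),(−1,0,0))`. -/
def G (n : ℕ) : Matrix (Fin 3) (Fin 3) ℝ :=
  !![0, 0, -1; 0, 2*(n:ℝ), 0; -1, 0, 0]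

lemma A_preserves_form_aux (n : ℕ) (hn : (n:ℝ) ≠ 0) (a b c d : ℝ) (h : a * d - b * c = 1) :
    (A n !![a, b; c, d])ᵀ * G n * A n !![a, b; c, d] = G n := by
  ext i j
  fin_cases i <;> fin_cases j <;>
    simp [A, G, Matrix.mul_apply, Fin.sum_univ_succ, Matrix.vecHead, Matrix.vecTail] <;>
    (try field_simp) <;> try ring
  · linear_combination (-(a*d - b*c + 1)) * h
  · linear_combination ((a*d - b*c + 1)) * h
  · linear_combination (-(a*d - b*c + 1)) * h

/-- For every positive integer `n` and `γ ∈ SL(2,ℝ)`, the matrix `A_n(γ)` preserves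
the bilinear form with Gram matrix `G_n`: `A_n(γ)ᵀ ⬝ G_n ⬝ A_n(γ) = G_n`. -/
theorem A_preserves_form (n : ℕ) (hn : 0 < n) (γ : Matrix (Fin 2) (Fin 2) ℝ)
    (hγ : γ.det = 1) :
    (A n γ)ᵀ * G n * A n γ = G n := by
  have hn' : (n : ℝ) ≠ 0 := Nat.cast_ne_zero.mpr hn.ne'
  rw [Matrix.det_fin_two] at hγ
  have hrep : γ = !![γ 0 0, γ 0 1; γ 1 0, γ 1 1] := by
    ext i j; fin_cases i <;> fin_cases j <;> rfl
  rw [hrep]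
  exact A_preserves_form_aux n hn' _ _ _ _ hγ
end

section
/- For λ ∈ ℂ, define the quartic polynomial F_λ(x,y,z,t) = (x+z+t)(x+y+z+t)(z+t)(y+z) − λ·xyzt. Then for every nonzero λ ∈ ℂ and all x, y, z, t ∈ ℂ, one has F_{1/λ}(y+z, −z−t, x+z+t, −x−y−z−t) = −(1/λ) · F_λ(x,y,z,t). (Hence the substitution (x,y,z,t,λ) ↦ (y+z, −z−t, x+z+t, −x−y−z−t, 1/λ) is an involution of the family X̄₆ = {F_λ = 0} exchanging the fibres over λ and 1/λ; in particular the fibres over λ = 0 and λ = ∞ are isomorphic.) -/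
/-- The quartic polynomial defining the family `X̄₆`:
`F_λ(x,y,z,t) = (x+z+t)(x+y+z+t)(z+t)(y+z) − λ·xyzt`. -/
def F (lam x y z t : ℂ) : ℂ :=
  (x + z + t) * (x + y + z + t) * (z + t) * (y + z) - lam * x * y * z * t

/-- For every nonzero `λ ∈ ℂ` and all `x, y, z, t ∈ ℂ`:
`F_{1/λ}(y+z, −z−t, x+z+t, −x−y−z−t) = −(1/λ) · F_λ(x,y,z,t)`. Hence the
substitution `(x,y,z,t,λ) ↦ (y+z, −z−t, x+z+t, −x−y−z−t, 1/λ)` is an involution of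
the family `X̄₆ = {F_λ = 0}` exchanging the fibres over `λ` and `1/λ`; in
particular the fibres over `λ = 0` and `λ = ∞` are isomorphic. -/
theorem X6_involution (lam : ℂ) (hlam : lam ≠ 0) (x y z t : ℂ) :
    F (1/lam) (y + z) (-z - t) (x + z + t) (-x - y - z - t)
      = -(1/lam) * F lam x y z t := by
  unfold F
  field_simp [F]
  ring
end
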